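/- For every n ≥ 6, the graph G on n vertices obtained from a cycle v₁v₂⋯v_{n−2}v₁ on n − 2 vertices by adding a new vertex x joined to v₁ and v₂ and a new vertex y joined to v₂ and v₃ is 2-connected, has exactly n + 2 edges, and satisfies rc₂(G) ≤ n − 2. -/

import Mathlib

/-!
Write `c i = v (i mod (n - 2))` for the cycle. Colour the cycle edge `c i c (i+1)` with
`i mod (n - 2)`, and give both edges at `x` (resp. `y`) the colour of the cycle edge `c 0 c 1`
(resp. `c 1 c 2`) that this ear bypasses. Then any `n - 2` consecutive cycle edges are rainbow,
and so is such a run whose first or last vertex is swapped for the ear bypassing the adjacent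
edge. Hence between any two vertices the two ways around the cycle (entering or leaving through
`x` or `y` when these are endpoints) are internally disjoint rainbow paths. Such pairs of paths
also give 2-connectivity, since a deleted vertex lies on at most one of them.
-/

open SimpleGraph

/-- A walk is rainbow (w.r.t. an edge-colouring `col`) if its edges receive
pairwise distinct colours. -/
def IsRainbowWalk {V α : Type*} {G : SimpleGraph V} {u v : V} (col : Sym2 V → α)
    (p : G.Walk u v) : Prop :=
  (p.edges.map col).Nodup

/-- An edge-colouring is rainbow 2-connected if every two distinct vertices are
connected by two internally vertex-disjoint rainbow paths. -/
def RainbowTwoConnectedColouring {V α : Type*} (G : SimpleGraph V) (col : Sym2 V → α) : Prop :=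
  ∀ u v : V, u ≠ v → ∃ p q : G.Walk u v, p.IsPath ∧ q.IsPath ∧ p ≠ q ∧
    IsRainbowWalk col p ∧ IsRainbowWalk col q ∧
    ∀ w : V, w ∈ p.support → w ∈ q.support → w = u ∨ w = v

/-- The rainbow 2-connection number: the least number of colours in a rainbow
2-connected colouring. -/
noncomputable def rc2 {V : Type*} (G : SimpleGraph V) : ℕ :=
  sInf {r : ℕ | ∃ col : Sym2 V → Fin r, RainbowTwoConnectedColouring G col}

/-- A graph is 2-connected if it has at least 3 vertices and deleting any single
vertex leaves a connected graph. -/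
def TwoConnected {V : Type*} [Fintype V] (G : SimpleGraph V) : Prop :=
  3 ≤ Fintype.card V ∧ ∀ v : V, (G.induce ({v}ᶜ : Set V)).Connected

/-- `t2 n r`: minimum number of edges of a 2-connected graph on `n` vertices
with rainbow 2-connection number at most `r`. -/
noncomputable def t2 (n r : ℕ) : ℕ :=
  sInf {m : ℕ | ∃ G : SimpleGraph (Fin n), TwoConnected G ∧ rc2 G ≤ r ∧ G.edgeSet.ncard = m}

/-- `s2 n r`: maximum number of edges of a 2-connected graph on `n` vertices
with rainbow 2-connection number at least `r`. -/
noncomputable def s2 (n r : ℕ) : ℕ :=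
  sSup {m : ℕ | ∃ G : SimpleGraph (Fin n), TwoConnected G ∧ r ≤ rc2 G ∧ G.edgeSet.ncard = m}

section

variable {V α : Type*}

def RainbowLinked (G : SimpleGraph V) (col : Sym2 V → α) (u v : V) : Prop :=
  ∃ p q : G.Walk u v, p.IsPath ∧ q.IsPath ∧ p ≠ q ∧
    IsRainbowWalk col p ∧ IsRainbowWalk col q ∧
    ∀ w : V, w ∈ p.support → w ∈ q.support → w = u ∨ w = v

section Rainbow

variable {G : SimpleGraph V} {col : Sym2 V → α} {u v : V}

lemma isRainbowWalk_reverse {p : G.Walk u v} :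
    IsRainbowWalk col p.reverse ↔ IsRainbowWalk col p := by
  simp only [IsRainbowWalk, Walk.edges_reverse, List.map_reverse, List.nodup_reverse]

lemma RainbowLinked.symm (h : RainbowLinked G col u v) : RainbowLinked G col v u := by
  obtain ⟨p, q, hp, hq, hpq, hpc, hqc, hdisj⟩ := h
  refine ⟨p.reverse, q.reverse, hp.reverse, hq.reverse, fun h => hpq ?_,
    isRainbowWalk_reverse.2 hpc, isRainbowWalk_reverse.2 hqc,
    fun w hwp hwq => (hdisj w (by simpa using hwp) (by simpa using hwq)).symm⟩
  simpa using congrArg Walk.reverse h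

/-- The length bound rules out `p` and `q.reverse` being one and the same edge. -/
lemma RainbowLinked.of_paths (p : G.Walk u v) (q : G.Walk v u) (hp : p.IsPath) (hq : q.IsPath)
    (hpc : IsRainbowWalk col p) (hqc : IsRainbowWalk col q)
    (hdisj : ∀ w ∈ p.support, w ∈ q.support → w = u ∨ w = v)
    (hlen : 3 ≤ p.length + q.length) : RainbowLinked G col u v := by
  refine ⟨p, q.reverse, hp, hq.reverse, ?_, hpc, isRainbowWalk_reverse.2 hqc,
    fun w hwp hwq => hdisj w hwp (by simpa using hwq)⟩
  rintro rfl
  have hlen : 2 ≤ q.length := by simp only [Walk.length_reverse] at hlen; omega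
  have hmem : q.getVert 1 ∈ q.support := q.getVert_mem_support 1
  have hinj := hq.getVert_injOn
  rcases hdisj _ (by rwa [Walk.support_reverse, List.mem_reverse]) hmem with h | h
  · have := hinj (show 1 ∈ {i | i ≤ q.length} by simp; omega)
      (show q.length ∈ {i | i ≤ q.length} by simp) (h.trans q.getVert_length.symm)
    omega
  · have := hinj (show 1 ∈ {i | i ≤ q.length} by simp; omega)
      (show 0 ∈ {i | i ≤ q.length} by simp) (h.trans q.getVert_zero.symm)
    omega

lemma twoConnected_of_rainbowTwoConnectedColouring [Fintype V] (hV : 3 ≤ Fintype.card V)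
    (h : RainbowTwoConnectedColouring G col) : TwoConnected G := by
  refine ⟨hV, fun w => ?_⟩
  have : Nontrivial V := Fintype.one_lt_card_iff_nontrivial.1 (by omega)
  obtain ⟨u, hu⟩ := exists_ne w
  refine induce_connected_of_patches u hu fun {v} hv => ?_
  obtain ⟨p, hp⟩ : ∃ p : G.Walk u v, w ∉ p.support := by
    by_cases huv : u = v
    · subst huv
      exact ⟨Walk.nil, by simp [hu.symm]⟩
    obtain ⟨p, q, -, -, -, -, -, hdisj⟩ := h u v huv
    by_cases hwp : w ∈ p.support
    · refine ⟨q, fun hwq => ?_⟩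
      rcases hdisj w hwp hwq with rfl | rfl
      exacts [hu rfl, hv rfl]
    · exact ⟨p, hwp⟩
  exact ⟨{z | z ∈ p.support}, fun z hz hzw => hp (hzw ▸ hz), p.start_mem_support,
    p.end_mem_support, p.connected_induce_support.preconnected _ _⟩

end Rainbow

lemma nodup_map_range'_of_modEq {β : Type*} {m k : ℕ} {f : ℕ → β}
    (hf : ∀ i j, f i = f j → i ≡ j [MOD m]) (hk : k ≤ m) (a : ℕ) :
    ((List.range' a k).map f).Nodup := by
  refine (List.nodup_range' ..).map_on fun i hi j hj h => ?_
  rw [List.mem_range'_1] at hi hj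
  exact (hf i j h).eq_of_abs_lt (abs_sub_lt_iff.2 ⟨by omega, by omega⟩)

/-- Cycle positions are natural numbers read modulo `m`, so arcs run along increasing indices and
never need to wrap around. -/
structure IsCycleSeq (G : SimpleGraph V) (m : ℕ) (c : ℕ → V) : Prop where
  adj : ∀ i, G.Adj (c i) (c (i + 1))
  eq_iff : ∀ i j, c i = c j ↔ i ≡ j [MOD m]

structure IsEar (G : SimpleGraph V) (c : ℕ → V) (x : V) (s : ℕ) : Prop where
  ne : ∀ i, c i ≠ x
  adj_left : G.Adj x (c s)
  adj_right : G.Adj x (c (s + 1))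

def IsRainbowCycle (col : Sym2 V → α) (m : ℕ) (c : ℕ → V) : Prop :=
  ∀ i j, col s(c i, c (i + 1)) = col s(c j, c (j + 1)) → i ≡ j [MOD m]

def ColoursEar (col : Sym2 V → α) (c : ℕ → V) (x : V) (s : ℕ) : Prop :=
  col s(x, c s) = col s(c s, c (s + 1)) ∧ col s(x, c (s + 1)) = col s(c s, c (s + 1))

section EdgeColours

variable {G : SimpleGraph V} {col : Sym2 V → α} {c : ℕ → V} {x : V} {s : ℕ}

lemma map_col_edges_cons_of_ear (hx : IsEar G c x s) (hxc : ColoursEar col c x s) {w : V}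
    {p : G.Walk (c (s + 1)) w} {k : ℕ}
    (hp : p.edges.map col = (List.range' (s + 1) k).map fun i => col s(c i, c (i + 1))) :
    (Walk.cons hx.adj_right p).edges.map col =
      (List.range' s (k + 1)).map fun i => col s(c i, c (i + 1)) := by
  rw [Walk.edges_cons, List.map_cons, hp, hxc.2, List.range'_succ, List.map_cons]

lemma map_col_edges_concat_of_ear {a k b : ℕ} (hx : IsEar G c x b) (hxc : ColoursEar col c x b)
    (hb : a + k = b) {w : V} {p : G.Walk w (c b)}
    (hp : p.edges.map col = (List.range' a k).map fun i => col s(c i, c (i + 1))) :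
    (p.concat hx.adj_left.symm).edges.map col =
      (List.range' a (k + 1)).map fun i => col s(c i, c (i + 1)) := by
  subst hb
  rw [Walk.edges_concat, List.concat_eq_append, List.map_append, hp, List.range'_1_concat,
    List.map_append, List.map_singleton, List.map_singleton, Sym2.eq_swap, hxc.1]

lemma isRainbowWalk_of_map_col_edges {m : ℕ} (hcol : IsRainbowCycle col m c) {u w : V}
    {p : G.Walk u w} {a k : ℕ}
    (hp : p.edges.map col = (List.range' a k).map fun i => col s(c i, c (i + 1)))
    (hk : k ≤ m) : IsRainbowWalk col p := by
  rw [IsRainbowWalk, hp]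
  exact nodup_map_range'_of_modEq hcol hk a

end EdgeColours

namespace IsCycleSeq

variable {G : SimpleGraph V} {m : ℕ} {c : ℕ → V} {x y : V}

lemma eq_of_modEq (hC : IsCycleSeq G m c) {i j : ℕ} (h : i ≡ j [MOD m]) : c i = c j :=
  (hC.eq_iff i j).2 h

lemma exists_eq_add (hC : IsCycleSeq G m c) (hm : 0 < m) (a b : ℕ) :
    ∃ k < m, c b = c (a + k) := by
  refine ⟨(b + m - a % m) % m, Nat.mod_lt _ hm, hC.eq_of_modEq ?_⟩
  have := Nat.mod_lt a hm
  calc b ≡ b + m [MOD m] := Nat.add_modEq_right.symm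
    _ = a % m + (b + m - a % m) := by omega
    _ ≡ a + (b + m - a % m) % m [MOD m] := (Nat.mod_modEq a m).add (Nat.mod_modEq _ m).symm

lemma modEq_of_edge_eq (hC : IsCycleSeq G m c) (hm : 3 ≤ m) {i j : ℕ}
    (h : s(c i, c (i + 1)) = s(c j, c (j + 1))) : i ≡ j [MOD m] := by
  rcases Sym2.eq_iff.1 h with ⟨h₁, -⟩ | ⟨h₁, h₂⟩
  · exact (hC.eq_iff i j).1 h₁
  · have h₁ := (hC.eq_iff _ _).1 h₁
    have h₂ := (hC.eq_iff _ _).1 h₂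
    have : 2 + i ≡ 0 + i [MOD m] :=
      calc 2 + i = i + 1 + 1 := by ring
        _ ≡ j + 1 [MOD m] := h₂.add_right 1
        _ ≡ 0 + i [MOD m] := by rw [zero_add]; exact h₁.symm
    have := Nat.le_of_dvd two_pos (Nat.modEq_zero_iff_dvd.1 (this.add_right_cancel' i))
    omega

def arc (hC : IsCycleSeq G m c) (a : ℕ) : (k : ℕ) → G.Walk (c a) (c (a + k))
  | 0 => Walk.nil
  | k + 1 => (hC.arc a k).concat (hC.adj (a + k))

lemma support_arc (hC : IsCycleSeq G m c) (a k : ℕ) :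
    (hC.arc a k).support = (List.range' a (k + 1)).map c := by
  induction k with
  | zero => simp [arc]
  | succ k ih => rw [arc, Walk.support_concat, ih, List.range'_1_concat (n := k + 1),
      List.map_append]; rfl

lemma edges_arc (hC : IsCycleSeq G m c) (a k : ℕ) :
    (hC.arc a k).edges = (List.range' a k).map fun i => s(c i, c (i + 1)) := by
  induction k with
  | zero => simp [arc]
  | succ k ih => rw [arc, Walk.edges_concat, ih, List.concat_eq_append, List.range'_1_concat,
      List.map_append]; rfl

lemma length_arc (hC : IsCycleSeq G m c) (a k : ℕ) : (hC.arc a k).length = k := by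
  simp [← Walk.length_edges, edges_arc]

lemma mem_support_arc (hC : IsCycleSeq G m c) {a k : ℕ} {z : V} :
    z ∈ (hC.arc a k).support ↔ ∃ i, a ≤ i ∧ i ≤ a + k ∧ c i = z := by
  simp only [support_arc, List.mem_map, List.mem_range'_1]
  constructor
  · rintro ⟨i, ⟨h₁, h₂⟩, rfl⟩
    exact ⟨i, h₁, by omega, rfl⟩
  · rintro ⟨i, h₁, h₂, rfl⟩
    exact ⟨i, ⟨h₁, by omega⟩, rfl⟩

lemma isPath_arc (hC : IsCycleSeq G m c) (a : ℕ) {k : ℕ} (hk : k < m) :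
    (hC.arc a k).IsPath := by
  rw [Walk.isPath_def, support_arc]
  exact nodup_map_range'_of_modEq (fun i j => (hC.eq_iff i j).1) hk a

lemma map_col_edges_arc (hC : IsCycleSeq G m c) (col : Sym2 V → α) (a k : ℕ) :
    (hC.arc a k).edges.map col = (List.range' a k).map fun i => col s(c i, c (i + 1)) := by
  rw [edges_arc, List.map_map]; rfl

lemma notMem_support_arc (hC : IsCycleSeq G m c) {x : V} (hx : ∀ i, c i ≠ x) (a k : ℕ) :
    x ∉ (hC.arc a k).support := by
  rw [mem_support_arc]
  rintro ⟨i, -, -, hi⟩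
  exact hx i hi

lemma injOn_Ico (hC : IsCycleSeq G m c) (a : ℕ) : Set.InjOn c (Set.Ico a (a + m)) :=
  fun i hi j hj h => ((hC.eq_iff i j).1 h).eq_of_abs_lt
    (abs_sub_lt_iff.2 ⟨by simp at hi hj; omega, by simp at hi hj; omega⟩)

lemma isEar_of_modEq (hC : IsCycleSeq G m c) {x : V} {s t : ℕ} (hx : IsEar G c x s)
    (h : s ≡ t [MOD m]) : IsEar G c x t :=
  ⟨hx.ne, hC.eq_of_modEq h ▸ hx.adj_left, hC.eq_of_modEq (h.add_right 1) ▸ hx.adj_right⟩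

lemma coloursEar_of_modEq (hC : IsCycleSeq G m c) {col : Sym2 V → α} {x : V} {s t : ℕ}
    (hx : ColoursEar col c x s) (h : s ≡ t [MOD m]) : ColoursEar col c x t := by
  rwa [ColoursEar, ← hC.eq_of_modEq h, ← hC.eq_of_modEq (h.add_right 1)]

lemma rainbowLinked_of_ne (hC : IsCycleSeq G m c) (hm : 3 ≤ m) (hcol : IsRainbowCycle col m c)
    {a b : ℕ} (hab : c a ≠ c b) : RainbowLinked G col (c a) (c b) := by
  obtain ⟨k, hk, hb⟩ := hC.exists_eq_add (by omega) a b
  rw [hb] at hab ⊢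
  obtain ⟨l, rfl⟩ : ∃ l, m = k + l := ⟨m - k, by omega⟩
  have hk₀ : k ≠ 0 := by rintro rfl; exact hab rfl
  have hend : c (a + k + l) = c a := hC.eq_of_modEq (by rw [add_assoc]; exact Nat.add_modEq_right)
  refine .of_paths (hC.arc a k) ((hC.arc (a + k) l).copy rfl hend) (hC.isPath_arc a hk)
    ((Walk.isPath_copy _ _ _).2 (hC.isPath_arc _ (by omega)))
    (isRainbowWalk_of_map_col_edges hcol (hC.map_col_edges_arc col a k) hk.le)
    (isRainbowWalk_of_map_col_edges hcol (by rw [Walk.edges_copy, hC.map_col_edges_arc])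
      (by omega)) ?_ (by simp only [Walk.length_copy, length_arc]; omega)
  intro w hw hw'
  rw [Walk.support_copy, mem_support_arc] at hw'
  rw [mem_support_arc] at hw
  obtain ⟨i, hi₁, hi₂, rfl⟩ := hw
  obtain ⟨j, hj₁, hj₂, hji⟩ := hw'
  rcases hj₂.lt_or_eq with hj₂ | rfl
  · have hij := hC.injOn_Ico a ⟨by omega, by omega⟩ ⟨by omega, by omega⟩ hji.symm
    exact .inr (congrArg c (by omega))
  · exact .inl (hji.symm.trans hend)

lemma rainbowLinked_ear (hC : IsCycleSeq G m c) (hm : 3 ≤ m) (hcol : IsRainbowCycle col m c)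
    {x : V} {s : ℕ} (hx : IsEar G c x s) (hxc : ColoursEar col c x s) (b : ℕ) :
    RainbowLinked G col x (c b) := by
  obtain ⟨k, hk, hb⟩ := hC.exists_eq_add (by omega) (s + 1) b
  rw [hb]
  obtain ⟨l, rfl⟩ : ∃ l, m = k + l + 1 := ⟨m - k - 1, by omega⟩
  have hs : s ≡ s + 1 + k + l [MOD k + l + 1] := by
    rw [show s + 1 + k + l = s + (k + l + 1) by ring]; exact Nat.add_modEq_right.symm
  have hx' := hC.isEar_of_modEq hx hs
  refine .of_paths (.cons hx.adj_right (hC.arc (s + 1) k))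
    ((hC.arc (s + 1 + k) l).concat hx'.adj_left.symm)
    ((Walk.cons_isPath_iff _ _).2 ⟨hC.isPath_arc _ hk, hC.notMem_support_arc hx.ne _ _⟩)
    ((Walk.concat_isPath_iff _).2 ⟨hC.isPath_arc _ (by omega), hC.notMem_support_arc hx.ne _ _⟩)
    (isRainbowWalk_of_map_col_edges hcol
      (map_col_edges_cons_of_ear hx hxc (hC.map_col_edges_arc col _ _)) (by omega))
    (isRainbowWalk_of_map_col_edges hcol (map_col_edges_concat_of_ear hx'
      (hC.coloursEar_of_modEq hxc hs) rfl (hC.map_col_edges_arc col _ _)) (by omega)) ?_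
    (by simp only [Walk.length_cons, Walk.length_concat, length_arc]; omega)
  intro w hw hw'
  rw [Walk.support_cons, List.mem_cons, mem_support_arc] at hw
  rw [Walk.support_concat, List.mem_append, List.mem_singleton, mem_support_arc] at hw'
  rcases hw with rfl | ⟨i, hi₁, hi₂, rfl⟩
  · exact .inl rfl
  obtain ⟨j, hj₁, hj₂, hji⟩ | hix := hw'
  · have hij := hC.injOn_Ico (s + 1) ⟨by omega, by omega⟩ ⟨by omega, by omega⟩ hji.symm
    exact .inr (congrArg c (by omega))
  · exact absurd hix (hx.ne i)

lemma rainbowLinked_ears (hC : IsCycleSeq G m c) (hcol : IsRainbowCycle col m c) {s t : ℕ}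
    (hst : s < t) (hts : t + 2 ≤ s + m) (hx : IsEar G c x s) (hxc : ColoursEar col c x s)
    (hy : IsEar G c y t) (hyc : ColoursEar col c y t) (hxy : x ≠ y) :
    RainbowLinked G col x y := by
  obtain ⟨k, rfl⟩ : ∃ k, t = s + 1 + k := ⟨t - s - 1, by omega⟩
  obtain ⟨l, rfl⟩ : ∃ l, m = k + l + 2 := ⟨m - k - 2, by omega⟩
  have hs : s ≡ s + 1 + k + 1 + l [MOD k + l + 2] := by
    rw [show s + 1 + k + 1 + l = s + (k + l + 2) by ring]; exact Nat.add_modEq_right.symm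
  have hx' := hC.isEar_of_modEq hx hs
  refine .of_paths ((Walk.cons hx.adj_right (hC.arc (s + 1) k)).concat hy.adj_left.symm)
    (.cons hy.adj_right ((hC.arc (s + 1 + k + 1) l).concat hx'.adj_left.symm))
    ((Walk.concat_isPath_iff _).2 ⟨(Walk.cons_isPath_iff _ _).2
      ⟨hC.isPath_arc _ (by omega), hC.notMem_support_arc hx.ne _ _⟩,
        by simpa [Walk.support_cons, hxy.symm] using hC.notMem_support_arc hy.ne _ _⟩)
    ((Walk.cons_isPath_iff _ _).2 ⟨(Walk.concat_isPath_iff _).2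
      ⟨hC.isPath_arc _ (by omega), hC.notMem_support_arc hx.ne _ _⟩,
        by simpa [Walk.support_concat, hxy.symm] using hC.notMem_support_arc hy.ne _ _⟩)
    (isRainbowWalk_of_map_col_edges hcol (map_col_edges_concat_of_ear hy hyc (by ring)
      (map_col_edges_cons_of_ear hx hxc (hC.map_col_edges_arc col _ _))) (by omega))
    (isRainbowWalk_of_map_col_edges hcol (map_col_edges_cons_of_ear hy hyc
      (map_col_edges_concat_of_ear hx' (hC.coloursEar_of_modEq hxc hs) rfl
        (hC.map_col_edges_arc col _ _))) (by omega)) ?_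
    (by simp only [Walk.length_cons, Walk.length_concat, length_arc]; omega)
  intro w hw hw'
  simp only [Walk.support_concat, Walk.support_cons, List.mem_append, List.mem_cons,
    List.not_mem_nil, or_false, mem_support_arc] at hw hw'
  rcases hw with (rfl | ⟨i, hi₁, hi₂, rfl⟩) | rfl
  · exact .inl rfl
  · rcases hw' with rfl | ⟨j, hj₁, hj₂, hji⟩ | hix
    · exact absurd rfl (hy.ne i)
    · have hij := hC.injOn_Ico (s + 1) ⟨by omega, by omega⟩ ⟨by omega, by omega⟩ hji.symm
      omega
    · exact absurd hix (hx.ne i)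
  · exact .inr rfl

lemma rainbowTwoConnectedColouring (hC : IsCycleSeq G m c) (hm : 3 ≤ m) {col : Sym2 V → α}
    (hcol : IsRainbowCycle col m c) {s t : ℕ} (hst : s < t) (hts : t + 2 ≤ s + m)
    (hx : IsEar G c x s) (hxc : ColoursEar col c x s) (hy : IsEar G c y t)
    (hyc : ColoursEar col c y t) (hV : ∀ w, w = x ∨ w = y ∨ ∃ i, c i = w) :
    RainbowTwoConnectedColouring G col := by
  have hx' := hC.rainbowLinked_ear hm hcol hx hxc
  have hy' := hC.rainbowLinked_ear hm hcol hy hyc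
  have hxy' := hC.rainbowLinked_ears hcol hst hts hx hxc hy hyc
  intro u w huw
  rcases hV u with rfl | rfl | ⟨a, rfl⟩ <;> rcases hV w with rfl | rfl | ⟨b, rfl⟩
  · exact absurd rfl huw
  · exact hxy' huw
  · exact hx' b
  · exact (hxy' huw.symm).symm
  · exact absurd rfl huw
  · exact hy' b
  · exact (hx' a).symm
  · exact (hy' a).symm
  · exact hC.rainbowLinked_of_ne hm hcol huw

lemma exists_colouring (hC : IsCycleSeq G m c) (hm : 3 ≤ m) (hx : ∀ i, c i ≠ x)
    (hy : ∀ i, c i ≠ y) (hxy : x ≠ y) (s t : ℕ) :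
    ∃ col : Sym2 V → Fin m, IsRainbowCycle col m c ∧ ColoursEar col c x s ∧
      ColoursEar col c y t := by
  classical
  let κ : Sym2 V → ℕ := fun e =>
    if h : ∃ i, e = s(c i, c (i + 1)) then h.choose else if y ∈ e then t else s
  have hκ (i : ℕ) : κ s(c i, c (i + 1)) ≡ i [MOD m] := by
    have h : ∃ j, s(c i, c (i + 1)) = s(c j, c (j + 1)) := ⟨i, rfl⟩
    simp only [κ, dif_pos h]
    exact hC.modEq_of_edge_eq hm h.choose_spec.symm
  have hoff {z : V} (hz : ∀ j, c j ≠ z) (i : ℕ) :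
      ¬ ∃ j, s(z, c i) = s(c j, c (j + 1)) := by
    rintro ⟨j, hj⟩
    rcases Sym2.eq_iff.1 hj with ⟨h, -⟩ | ⟨h, -⟩
    exacts [hz _ h.symm, hz _ h.symm]
  have hκx (i : ℕ) : κ s(x, c i) = s := by
    simp [κ, dif_neg (hoff hx i), hxy.symm, (hy i).symm]
  have hκy (i : ℕ) : κ s(y, c i) = t := by simp [κ, dif_neg (hoff hy i)]
  let col : Sym2 V → Fin m := fun e => ⟨κ e % m, Nat.mod_lt _ (by omega)⟩
  have hcol {e e' : Sym2 V} : col e = col e' ↔ κ e ≡ κ e' [MOD m] := Fin.ext_iff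
  refine ⟨col, fun i j h => (hκ i).symm.trans ((hcol.1 h).trans (hκ j)), ?_, ?_⟩ <;>
    refine ⟨hcol.2 ?_, hcol.2 ?_⟩ <;>
    simp only [hκx, hκy] <;> exact (hκ _).symm

lemma eq_or_eq_or_exists [Fintype V] (hC : IsCycleSeq G m c) (hcard : Fintype.card V = m + 2)
    (hx : ∀ i, c i ≠ x) (hy : ∀ i, c i ≠ y) (hxy : x ≠ y) (w : V) :
    w = x ∨ w = y ∨ ∃ i, c i = w := by
  classical
  have hS : insert x (insert y ((Finset.range m).image c)) = Finset.univ := by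
    refine Finset.eq_univ_of_card _ ?_
    rw [Finset.card_insert_of_notMem (by simp [hxy, hx]), Finset.card_insert_of_notMem
      (by simp [hy]), Finset.card_image_of_injOn, Finset.card_range, hcard]
    exact fun i hi j hj h => hC.injOn_Ico 0 ⟨i.zero_le, by simpa using hi⟩
      ⟨j.zero_le, by simpa using hj⟩ h
  have hw := hS ▸ Finset.mem_univ w
  simp only [Finset.mem_insert, Finset.mem_image, Finset.mem_range] at hw
  rcases hw with h | h | ⟨i, -, h⟩
  exacts [.inl h, .inr (.inl h), .inr (.inr ⟨i, h⟩)]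

lemma card_cycleEdges_union_earEdges [DecidableEq V] (hC : IsCycleSeq G m c) (hm : 3 ≤ m)
    (hx : ∀ i, c i ≠ x) (hy : ∀ i, c i ≠ y) (hxy : x ≠ y) (s t : ℕ) :
    ((Finset.range m).image (fun i => s(c i, c (i + 1))) ∪
      {s(x, c s), s(x, c (s + 1)), s(y, c t), s(y, c (t + 1))}).card = m + 4 := by
  have hs := (hC.adj s).ne
  have ht := (hC.adj t).ne
  rw [Finset.card_union_of_disjoint, Finset.card_image_of_injOn, Finset.card_range]
  · rw [Finset.card_insert_of_notMem, Finset.card_insert_of_notMem, Finset.card_insert_of_notMem,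
      Finset.card_singleton] <;> simp [hxy, hs, ht, hx, hy]
  · exact fun i hi j hj h => (hC.modEq_of_edge_eq hm h).eq_of_lt_of_lt
      (by simpa using hi) (by simpa using hj)
  · simp [Finset.disjoint_left, hx, hy]

end IsCycleSeq

lemma isCycleSeq_mod {G : SimpleGraph V} {m : ℕ} (hm : 0 < m) {v : ℕ → V}
    (hinj : ∀ i j, i ≤ m - 1 → j ≤ m - 1 → v i = v j → i = j)
    (hadj : ∀ i, i + 1 ≤ m - 1 → G.Adj (v i) (v (i + 1))) (hwrap : G.Adj (v (m - 1)) (v 0)) :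
    IsCycleSeq G m fun i => v (i % m) where
  adj i := by
    have := Nat.mod_lt i hm
    rw [← Nat.mod_add_mod i m 1]
    rcases (show i % m + 1 < m ∨ i % m = m - 1 by omega) with h | h
    · rw [Nat.mod_eq_of_lt h]
      exact hadj _ (by omega)
    · rw [h, Nat.sub_add_cancel hm, Nat.mod_self]
      exact hwrap
  eq_iff i j := by
    have := Nat.mod_lt i hm
    have := Nat.mod_lt j hm
    exact ⟨hinj _ _ (by omega) (by omega), congrArg v⟩

lemma edgeSet_eq_of_adj_iff [DecidableEq V] {G : SimpleGraph V} {m : ℕ} (hm : 0 < m)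
    {v : ℕ → V} {F : Finset (Sym2 V)}
    (hadj : ∀ a b, G.Adj a b ↔ (∃ i, i + 1 ≤ m - 1 ∧ s(a, b) = s(v i, v (i + 1))) ∨
      s(a, b) = s(v (m - 1), v 0) ∨ s(a, b) ∈ F) :
    G.edgeSet = ↑((Finset.range m).image (fun i => s(v (i % m), v ((i + 1) % m))) ∪ F) := by
  ext e
  induction e using Sym2.ind with | _ a b => ?_
  simp only [mem_edgeSet, hadj, Finset.coe_union, Set.mem_union, Finset.mem_coe,
    Finset.mem_image, Finset.mem_range, ← or_assoc]
  refine or_congr_left ⟨?_, ?_⟩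
  · rintro (⟨i, hi, h⟩ | h)
    · exact ⟨i, by omega, by rw [Nat.mod_eq_of_lt (by omega), Nat.mod_eq_of_lt (by omega), h]⟩
    · exact ⟨m - 1, by omega, by rw [Nat.mod_eq_of_lt (by omega), Nat.sub_add_cancel hm,
        Nat.mod_self, h]⟩
  · rintro ⟨i, hi, h⟩
    rw [Nat.mod_eq_of_lt hi] at h
    rcases (show i + 1 < m ∨ i = m - 1 by omega) with hi' | rfl
    · rw [Nat.mod_eq_of_lt hi'] at h
      exact .inl ⟨i, by omega, h.symm⟩
    · rw [Nat.sub_add_cancel hm, Nat.mod_self] at h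
      exact .inr h.symm

end

/-- For n ≥ 6, the graph obtained from a cycle v₀v₁⋯v₍n₋₃₎v₀ on
n − 2 vertices by adding a new vertex x joined to v₀ and v₁ and a new vertex y
joined to v₁ and v₂ is 2-connected, has n + 2 edges, and satisfies rc₂ ≤ n − 2. -/
theorem stmt10 (n : ℕ) (hn : 6 ≤ n) {V : Type*} [Fintype V] (hcard : Fintype.card V = n)
    (x y : V) (hxy : x ≠ y) (v : ℕ → V)
    (hvinj : ∀ i j, i ≤ n - 3 → j ≤ n - 3 → v i = v j → i = j)
    (hxv : ∀ i, i ≤ n - 3 → x ≠ v i) (hyv : ∀ i, i ≤ n - 3 → y ≠ v i)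
    (G : SimpleGraph V)
    (hadj : ∀ a b : V, G.Adj a b ↔
      ((∃ i, i + 1 ≤ n - 3 ∧ ({a, b} : Set V) = {v i, v (i + 1)}) ∨
       ({a, b} : Set V) = {v (n - 3), v 0} ∨
       ({a, b} : Set V) = {x, v 0} ∨ ({a, b} : Set V) = {x, v 1} ∨
       ({a, b} : Set V) = {y, v 1} ∨ ({a, b} : Set V) = {y, v 2})) :
    TwoConnected G ∧ G.edgeSet.ncard = n + 2 ∧ rc2 G ≤ n - 2 := by
  classical
  obtain ⟨m, rfl⟩ : ∃ m, n = m + 2 := ⟨n - 2, by omega⟩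
  simp only [show m + 2 - 3 = m - 1 by omega, Set.pair_eq_pair_iff, ← Sym2.eq_iff]
    at hvinj hxv hyv hadj
  have hC : IsCycleSeq G m fun i => v (i % m) := isCycleSeq_mod (by omega) hvinj
    (fun i hi => (hadj _ _).2 (.inl ⟨i, hi, rfl⟩)) ((hadj _ _).2 (.inr (.inl rfl)))
  have hmod (i : ℕ) : i % m ≤ m - 1 := by have := Nat.mod_lt i (by omega : 0 < m); omega
  have hcx (i : ℕ) : v (i % m) ≠ x := fun h => hxv _ (hmod i) h.symm
  have hcy (i : ℕ) : v (i % m) ≠ y := fun h => hyv _ (hmod i) h.symm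
  have h₁ : 1 % m = 1 := Nat.mod_eq_of_lt (by omega)
  have h₂ : 2 % m = 2 := Nat.mod_eq_of_lt (by omega)
  have hx : IsEar G (fun i => v (i % m)) x 0 := ⟨hcx, by simp [hadj], by simp [h₁, hadj]⟩
  have hy : IsEar G (fun i => v (i % m)) y 1 :=
    ⟨hcy, by simp [h₁, hadj], by simp [h₂, hadj]⟩
  obtain ⟨col, hcol, hxc, hyc⟩ := hC.exists_colouring (by omega) hcx hcy hxy 0 1
  have hrc := hC.rainbowTwoConnectedColouring (by omega) hcol (by omega) (by omega)
    hx hxc hy hyc (hC.eq_or_eq_or_exists hcard hcx hcy hxy)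
  refine ⟨twoConnected_of_rainbowTwoConnectedColouring (by omega) hrc, ?_,
    Nat.sInf_le ⟨col, hrc⟩⟩
  have hE := edgeSet_eq_of_adj_iff (m := m) (by omega)
    (F := {s(x, v (0 % m)), s(x, v ((0 + 1) % m)), s(y, v (1 % m)), s(y, v ((1 + 1) % m))})
    (by simpa [h₁, h₂] using hadj)
  rw [hE, Set.ncard_coe_finset, hC.card_cycleEdges_union_earEdges (by omega) hcx hcy hxy]
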